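/- arXiv:1710.02698 — 2 statements merged into one kernel-verified Lean document; each statement's English description precedes it below -/
import Mathlib

section
/- A monic polynomial L of degree n with real coefficients is the n-th monic Sobolev extremal polynomial with respect to ‖·‖_{S,p,m} if and only if ∑_{k=0}^{m} ∫ Q^{(k)}(x)·sgn(L^{(k)}(x))·|L^{(k)}(x)|^{p−1} dμ_k(x) = 0 for every real polynomial Q of degree at most n − 1. -/
/-!
The energy `E f = ∑ₖ ∫ |f⁽ᵏ⁾|^p dμₖ` is a convex function of `f`, and since `y ↦ |y|^p` is `C¹`
with derivative `p sgn(y) |y|^(p-1)`, the derivative of `t ↦ E (L + t Q)` at `0` is `p` times the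
sum in the statement; differentiating under the integral sign is legitimate because each `μₖ` is
finite and concentrated on a compact set. The monic polynomials of degree `n` form the affine
space `L + {Q : deg Q < n}`, so necessity is Fermat's rule along the lines `t ↦ L + t Q`, and
sufficiency is the tangent-line inequality `|a|^p + p sgn(a) |a|^(p-1) (b - a) ≤ |b|^p`
integrated with `a = L⁽ᵏ⁾(x)`, `b = Q⁽ᵏ⁾(x)`.
-/

open MeasureTheory Polynomial Set

/-- The (topological) support of a Borel measure on `ℝ`. -/
def msupport (μ : Measure ℝ) : Set ℝ :=
  {x : ℝ | ∀ U : Set ℝ, IsOpen U → x ∈ U → 0 < μ U}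

/-- The Sobolev `p`-norm `‖f‖_{S,p,m} = (∑_{k=0}^m ∫ |f^{(k)}|^p dμ_k)^(1/p)` of a polynomial. -/
noncomputable def sobNormM (p : ℝ) (m : ℕ) (μ : ℕ → Measure ℝ) (f : Polynomial ℝ) : ℝ :=
  (∑ k ∈ Finset.range (m + 1), ∫ x, |(derivative^[k] f).eval x| ^ p ∂(μ k)) ^ (1 / p)

/-- `L` is the `n`-th monic Sobolev extremal polynomial with respect to `‖·‖_{S,p,m}`. -/
def IsExtremalM (p : ℝ) (m : ℕ) (μ : ℕ → Measure ℝ) (n : ℕ) (L : Polynomial ℝ) : Prop :=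
  L.Monic ∧ L.natDegree = n ∧
    ∀ Q : Polynomial ℝ, Q.Monic → Q.natDegree = n →
      sobNormM p m μ L ≤ sobNormM p m μ Q

open Filter

theorem ae_mem_msupport (μ : Measure ℝ) : ∀ᵐ x ∂μ, x ∈ msupport μ := by
  have : msupport μ = μ.support := by
    ext x
    simp only [msupport, Measure.support_eq_forall_isOpen, mem_ofPred_eq]
    exact forall_congr' fun U => imp.swap
  exact this ▸ Measure.support_mem_ae

theorem Continuous.integrable_of_isCompact_msupport {E : Type*} [NormedAddCommGroup E]
    {μ : Measure ℝ} [IsFiniteMeasureOnCompacts μ] (hμ : IsCompact (msupport μ)) {f : ℝ → E}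
    (hf : Continuous f) : Integrable f μ := by
  rw [← Measure.restrict_eq_self_of_ae_mem (ae_mem_msupport μ)]
  exact hf.continuousOn.integrableOn_compact hμ

theorem hasDerivAt_integral_comp_add_mul {μ : Measure ℝ} [IsFiniteMeasureOnCompacts μ]
    (hμ : IsCompact (msupport μ)) {g g' u v : ℝ → ℝ} (hg : ∀ y, HasDerivAt g (g' y) y)
    (hg' : Continuous g') (hu : Continuous u) (hv : Continuous v) :
    HasDerivAt (fun t : ℝ => ∫ x, g (u x + t * v x) ∂μ) (∫ x, g' (u x) * v x ∂μ) 0 := by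
  have hgc : Continuous g := continuous_iff_continuousAt.2 fun y => (hg y).continuousAt
  have hline : ∀ t : ℝ, Continuous fun x => u x + t * v x := fun t => by fun_prop
  -- the derivative of the integrand is jointly continuous, so it is bounded on `[-1, 1] × supp μ`
  obtain ⟨C, hC⟩ := ((isCompact_closedBall (0 : ℝ) 1).prod hμ).exists_bound_of_continuousOn
    (f := fun q : ℝ × ℝ => g' (u q.2 + q.1 * v q.2) * v q.2) (by fun_prop)
  have hbound : ∀ᵐ x ∂μ, ∀ t ∈ Metric.ball (0 : ℝ) 1, ‖g' (u x + t * v x) * v x‖ ≤ C := by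
    filter_upwards [ae_mem_msupport μ] with x hx t ht
    exact hC (t, x) ⟨Metric.ball_subset_closedBall ht, hx⟩
  simpa using (hasDerivAt_integral_of_dominated_loc_of_deriv_le (Metric.ball_mem_nhds 0 one_pos)
    (Eventually.of_forall fun t => (hgc.comp (hline t)).aestronglyMeasurable)
    ((hgc.comp (hline 0)).integrable_of_isCompact_msupport hμ)
    ((hg'.comp (hline 0)).mul hv).aestronglyMeasurable
    hbound (continuous_const.integrable_of_isCompact_msupport hμ)
    (ae_of_all _ fun x t _ => (hg _).comp t ((hasDerivAt_mul_const (v x)).const_add (u x)))).2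

theorem ConvexOn.add_mul_sub_le_of_hasDerivAt {f : ℝ → ℝ} {f' x : ℝ} (hf : ConvexOn ℝ univ f)
    (hd : HasDerivAt f f' x) (y : ℝ) : f x + f' * (y - x) ≤ f y := by
  rcases lt_trichotomy x y with hxy | rfl | hxy
  · have := hf.le_slope_of_hasDerivAt (mem_univ x) (mem_univ y) hxy hd
    rw [slope_def_field, le_div_iff₀ (sub_pos.2 hxy)] at this
    linarith
  · simp
  · have := hf.slope_le_of_hasDerivAt (mem_univ y) (mem_univ x) hxy hd
    rw [slope_def_field, div_le_iff₀ (sub_pos.2 hxy)] at this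
    linarith

theorem convexOn_abs_rpow {p : ℝ} (hp : 1 ≤ p) : ConvexOn ℝ univ fun x : ℝ => |x| ^ p := by
  refine ⟨convex_univ, fun x _ y _ a b ha hb hab => ?_⟩
  have htri : |a • x + b • y| ≤ a • |x| + b • |y| := by
    simpa [smul_eq_mul, abs_mul, abs_of_nonneg ha, abs_of_nonneg hb] using
      abs_add_le (a * x) (b * y)
  calc |a • x + b • y| ^ p ≤ (a • |x| + b • |y|) ^ p :=
        Real.rpow_le_rpow (abs_nonneg _) htri (by linarith)
    _ ≤ a • |x| ^ p + b • |y| ^ p :=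
        (convexOn_rpow hp).2 (abs_nonneg x) (abs_nonneg y) ha hb hab

theorem Real.sign_mul_abs_rpow_sub_one (x p : ℝ) :
    Real.sign x * |x| ^ (p - 1) = |x| ^ (p - 2) * x := by
  rcases eq_or_ne x 0 with rfl | hx
  · simp [Real.sign_zero]
  · have hsx : Real.sign x * |x| = x := by
      rcases hx.lt_or_gt with h | h
      · rw [Real.sign_of_neg h, abs_of_neg h]; ring
      · rw [Real.sign_of_pos h, abs_of_pos h]; ring
    rw [show p - 1 = p - 2 + 1 by ring, Real.rpow_add_one (abs_ne_zero.2 hx)]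
    linear_combination |x| ^ (p - 2) * hsx

theorem hasDerivAt_abs_rpow_sign {p : ℝ} (hp : 1 < p) (x : ℝ) :
    HasDerivAt (fun x : ℝ => |x| ^ p) (p * (Real.sign x * |x| ^ (p - 1))) x := by
  simpa only [Real.sign_mul_abs_rpow_sub_one, mul_assoc] using hasDerivAt_abs_rpow x hp

theorem continuous_sign_mul_abs_rpow_sub_one {p : ℝ} (hp : 1 < p) :
    Continuous fun x : ℝ => Real.sign x * |x| ^ (p - 1) := by
  have hderiv : deriv (fun x : ℝ => ‖x‖ ^ p) = fun x => p * (Real.sign x * |x| ^ (p - 1)) :=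
    funext fun x => (hasDerivAt_abs_rpow_sign hp x).deriv
  have h := (contDiff_norm_rpow (E := ℝ) hp).continuous_deriv le_rfl
  rw [hderiv] at h
  simpa [(by linarith : p ≠ 0)] using h.const_mul p⁻¹

noncomputable def sobEnergy (p : ℝ) (m : ℕ) (μ : ℕ → Measure ℝ) (f : ℝ[X]) : ℝ :=
  ∑ k ∈ Finset.range (m + 1), ∫ x, |(derivative^[k] f).eval x| ^ p ∂(μ k)

noncomputable def sobVariation (p : ℝ) (m : ℕ) (μ : ℕ → Measure ℝ) (L Q : ℝ[X]) : ℝ :=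
  ∑ k ∈ Finset.range (m + 1),
    ∫ x, (derivative^[k] Q).eval x * Real.sign ((derivative^[k] L).eval x) *
      |(derivative^[k] L).eval x| ^ (p - 1) ∂(μ k)

section Sobolev

variable {p : ℝ} {m : ℕ} {μ : ℕ → Measure ℝ}

theorem sobNormM_le_sobNormM_iff (hp : 0 < p) (f g : ℝ[X]) :
    sobNormM p m μ f ≤ sobNormM p m μ g ↔ sobEnergy p m μ f ≤ sobEnergy p m μ g := by
  have hnonneg : ∀ f, 0 ≤ sobEnergy p m μ f := fun f =>
    Finset.sum_nonneg fun k _ => integral_nonneg fun x => Real.rpow_nonneg (abs_nonneg _) _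
  exact Real.rpow_le_rpow_iff (hnonneg f) (hnonneg g) (one_div_pos.2 hp)

variable (hfin : ∀ k ≤ m, IsFiniteMeasure (μ k)) (hc : ∀ k ≤ m, IsCompact (msupport (μ k)))
include hfin hc

theorem hasDerivAt_sobEnergy_add_smul (hp : 1 < p) (L Q : ℝ[X]) :
    HasDerivAt (fun t : ℝ => sobEnergy p m μ (L + t • Q)) (p * sobVariation p m μ L Q) 0 := by
  have hterm : ∀ k ∈ Finset.range (m + 1), HasDerivAt
      (fun t : ℝ => ∫ x, |(derivative^[k] L).eval x + t * (derivative^[k] Q).eval x| ^ p ∂(μ k))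
      (∫ x, p * (Real.sign ((derivative^[k] L).eval x) * |(derivative^[k] L).eval x| ^ (p - 1)) *
        (derivative^[k] Q).eval x ∂(μ k)) 0 := fun k hk => by
    have hk := Nat.lt_succ_iff.1 (Finset.mem_range.1 hk)
    have := hfin k hk
    exact hasDerivAt_integral_comp_add_mul (hc k hk) (hasDerivAt_abs_rpow_sign hp)
      (continuous_const.mul (continuous_sign_mul_abs_rpow_sub_one hp))
      (Polynomial.continuous _) (Polynomial.continuous _)
  have hfun : (fun t : ℝ => sobEnergy p m μ (L + t • Q)) = fun t => ∑ k ∈ Finset.range (m + 1),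
      ∫ x, |(derivative^[k] L).eval x + t * (derivative^[k] Q).eval x| ^ p ∂(μ k) := by
    funext t
    simp only [sobEnergy, iterate_map_add, iterate_derivative_smul, eval_add, eval_smul,
      smul_eq_mul]
  have hval : p * sobVariation p m μ L Q = ∑ k ∈ Finset.range (m + 1),
      ∫ x, p * (Real.sign ((derivative^[k] L).eval x) * |(derivative^[k] L).eval x| ^ (p - 1)) *
        (derivative^[k] Q).eval x ∂(μ k) := by
    rw [sobVariation, Finset.mul_sum]
    refine Finset.sum_congr rfl fun k _ => ?_
    rw [← integral_const_mul]
    congr 1 with x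
    ring
  rw [hfun, hval]
  exact HasDerivAt.fun_sum hterm

theorem sobEnergy_add_mul_sobVariation_le (hp : 1 < p) (L Q : ℝ[X]) :
    sobEnergy p m μ L + p * sobVariation p m μ L (Q - L) ≤ sobEnergy p m μ Q := by
  rw [sobVariation, Finset.mul_sum, sobEnergy, sobEnergy, ← Finset.sum_add_distrib]
  refine Finset.sum_le_sum fun k hk => ?_
  have hk := Nat.lt_succ_iff.1 (Finset.mem_range.1 hk)
  have := hfin k hk
  have hint : ∀ {f : ℝ → ℝ}, Continuous f → Integrable f (μ k) := fun hf =>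
    hf.integrable_of_isCompact_msupport (hc k hk)
  have hpow : ∀ f : ℝ[X], Continuous fun x => |f.eval x| ^ p := fun f =>
    (continuous_iff_continuousAt.2 fun y => (hasDerivAt_abs_rpow_sign hp y).continuousAt).comp
      f.continuous
  have hvar : Continuous fun x => p * ((derivative^[k] (Q - L)).eval x *
      Real.sign ((derivative^[k] L).eval x) * |(derivative^[k] L).eval x| ^ (p - 1)) := by
    have hsgn := (continuous_sign_mul_abs_rpow_sub_one hp).comp (derivative^[k] L).continuous
    simpa only [Function.comp_def, mul_assoc] using
      (continuous_const (y := p)).fun_mul ((derivative^[k] (Q - L)).continuous.fun_mul hsgn)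
  rw [← integral_const_mul, ← integral_add (hint (hpow _)) (hint hvar)]
  refine integral_mono (hint ((hpow _).add hvar)) (hint (hpow _)) fun x => ?_
  have := (convexOn_abs_rpow hp.le).add_mul_sub_le_of_hasDerivAt
    (hasDerivAt_abs_rpow_sign hp ((derivative^[k] L).eval x)) ((derivative^[k] Q).eval x)
  simp only [iterate_derivative_sub, eval_sub]
  linarith

end Sobolev

theorem stmt_5_general
    (p : ℝ) (hp : 1 < p) (m : ℕ)
    (μ : ℕ → Measure ℝ) (hfin : ∀ k ≤ m, IsFiniteMeasure (μ k))
    (hc : ∀ k ≤ m, IsCompact (msupport (μ k)))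
    (n : ℕ) (L : Polynomial ℝ) (hmonic : L.Monic) (hdeg : L.natDegree = n) :
    IsExtremalM p m μ n L ↔
      ∀ Q : Polynomial ℝ, Q.degree < (n : WithBot ℕ) →
        (∑ k ∈ Finset.range (m + 1),
          ∫ x, (derivative^[k] Q).eval x * Real.sign ((derivative^[k] L).eval x) *
            |(derivative^[k] L).eval x| ^ (p - 1) ∂(μ k)) = 0 := by
  have hp0 : 0 < p := by linarith
  have hLdeg : L.degree = n := by rw [degree_eq_natDegree hmonic.ne_zero, hdeg]
  change _ ↔ ∀ Q : ℝ[X], Q.degree < n → sobVariation p m μ L Q = 0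
  constructor
  · rintro ⟨-, -, hmin⟩ Q hQ
    have hlt : ∀ t : ℝ, (t • Q).degree < L.degree := fun t =>
      (degree_smul_le t Q).trans_lt (hLdeg ▸ hQ)
    have hlocmin : IsLocalMin (fun t : ℝ => sobEnergy p m μ (L + t • Q)) 0 :=
      Eventually.of_forall fun t => by
        simpa [sobNormM_le_sobNormM_iff hp0] using hmin _ (hmonic.add_of_left (hlt t))
          (by rw [natDegree_add_eq_left_of_degree_lt (hlt t), hdeg])
    have hderiv := hlocmin.hasDerivAt_eq_zero (hasDerivAt_sobEnergy_add_smul hfin hc hp L Q)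
    exact (mul_eq_zero.1 hderiv).resolve_left hp0.ne'
  · refine fun hvar => ⟨hmonic, hdeg, fun Q hQm hQn => ?_⟩
    have hQL : (Q - L).degree < n := by
      have hQdeg : Q.degree = n := by rw [degree_eq_natDegree hQm.ne_zero, hQn]
      refine hQdeg ▸ degree_sub_lt_left (hQdeg.trans hLdeg.symm) hQm.ne_zero ?_
      rw [hQm.leadingCoeff, hmonic.leadingCoeff]
    rw [sobNormM_le_sobNormM_iff hp0]
    simpa [hvar _ hQL] using sobEnergy_add_mul_sobVariation_le hfin hc hp L Q

theorem stmt_5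
    (p : ℝ) (hp : 1 < p) (m : ℕ)
    (μ : ℕ → Measure ℝ) (hfin : ∀ k ≤ m, IsFiniteMeasure (μ k))
    (hc : ∀ k ≤ m, IsCompact (msupport (μ k)))
    (h0inf : (msupport (μ 0)).Infinite)
    (n : ℕ) (L : Polynomial ℝ) (hmonic : L.Monic) (hdeg : L.natDegree = n) :
    IsExtremalM p m μ n L ↔
      ∀ Q : Polynomial ℝ, Q.degree < (n : WithBot ℕ) →
        (∑ k ∈ Finset.range (m + 1),
          ∫ x, (derivative^[k] Q).eval x * Real.sign ((derivative^[k] L).eval x) *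
            |(derivative^[k] L).eval x| ^ (p - 1) ∂(μ k)) = 0 :=
  stmt_5_general p hp m μ hfin hc n L hmonic hdeg
end

section
/- Let I be an interval of the real line and Q a nonconstant polynomial of degree n with real coefficients. Then the number of zeros of Q in I, counted with multiplicity, plus the number of zeros of Q′ in ℂ \ I, counted with multiplicity, is at most n. -/
/-!
Rolle's theorem, applied between consecutive distinct zeros of `Q` in the interval `I`, gives
zeros of `Q′` in `I` that are not zeros of `Q`; a zero of `Q` of multiplicity `m` is moreover a
zero of `Q′` of multiplicity at least `m - 1`. Hence `Q` has at most one zero more in `I` than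
`Q′` has, counted with multiplicity. Since `Q′` has at most `n - 1` complex zeros, of which those
in `I` include its real zeros in `I`, the two counts add up to at most `n`.
-/

open Polynomial Set

namespace Polynomial

theorem card_roots_filter_le_card_roots_map_filter_image {A B : Type*} [CommRing A] [IsDomain A]
    [CommRing B] [IsDomain B] {f : A →+* B} (hf : Function.Injective f) (p : A[X]) (s : Set A)
    [DecidablePred (· ∈ s)] [DecidablePred (· ∈ f '' s)] :
    Multiset.card (p.roots.filter (· ∈ s)) ≤ Multiset.card ((p.map f).roots.filter (· ∈ f '' s)) :=
  calc Multiset.card (p.roots.filter (· ∈ s))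
      = Multiset.card ((p.roots.map f).filter (· ∈ f '' s)) := by
        rw [Multiset.filter_map, Multiset.card_map]
        congr 2
        ext x
        exact (hf.mem_set_image).symm
    _ ≤ _ := Multiset.card_le_card (Multiset.filter_le_filter _ (map_roots_le_of_injective p hf))

variable {I : Set ℝ} [DecidablePred (· ∈ I)]

theorem card_roots_toFinset_filter_le_card_roots_derivative_sdiff_roots_succ
    (hI : I.OrdConnected) (p : ℝ[X]) :
    (p.roots.toFinset.filter (· ∈ I)).card ≤
      (p.derivative.roots.toFinset.filter (· ∈ I) \ p.roots.toFinset.filter (· ∈ I)).card + 1 := by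
  rcases eq_or_ne (derivative p) 0 with hp' | hp'
  · rw [eq_C_of_derivative_eq_zero hp']
    simp
  have hp : p ≠ 0 := ne_of_apply_ne derivative (by rwa [derivative_zero])
  refine Finset.card_le_sdiff_of_interleaved fun x hx y hy hxy _ => ?_
  rw [Finset.mem_filter, Multiset.mem_toFinset, mem_roots hp] at hx hy
  obtain ⟨z, hz, hz'⟩ := exists_deriv_eq_zero hxy p.continuousOn (hx.1.trans hy.1.symm)
  refine ⟨z, Finset.mem_filter.2 ⟨?_, hI.out hx.2 hy.2 (Ioo_subset_Icc_self hz)⟩, hz⟩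
  rwa [Multiset.mem_toFinset, mem_roots hp', IsRoot, ← p.deriv]

theorem card_roots_filter_le_card_roots_derivative_filter_succ (hI : I.OrdConnected) (p : ℝ[X]) :
    Multiset.card (p.roots.filter (· ∈ I)) ≤
      Multiset.card (p.derivative.roots.filter (· ∈ I)) + 1 := by
  set S := p.roots.filter (· ∈ I)
  set D := p.derivative.roots.filter (· ∈ I)
  have h_distinct : Multiset.card S.dedup ≤ Multiset.card (D.filter (· ∉ p.roots)) + 1 := by
    calc Multiset.card S.dedup = (p.roots.toFinset.filter (· ∈ I)).card := by
          rw [← Multiset.card_toFinset, Multiset.toFinset_filter]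
      _ ≤ (D.toFinset \ S.toFinset).card + 1 := by
          simpa only [S, D, Multiset.toFinset_filter] using
            card_roots_toFinset_filter_le_card_roots_derivative_sdiff_roots_succ hI p
      _ ≤ Multiset.card (D.filter (· ∉ p.roots)) + 1 := by
          gcongr
          refine (Finset.card_le_card fun x hx => ?_).trans (Multiset.toFinset_card_le _)
          simp only [S, D, Finset.mem_sdiff, Multiset.mem_toFinset, Multiset.mem_filter] at hx ⊢
          tauto
  have h_repeated : S - S.dedup ≤ D.filter (· ∈ p.roots) := by
    refine Multiset.le_iff_count.2 fun x => ?_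
    rw [Multiset.count_sub, Multiset.count_dedup]
    by_cases hx : x ∈ S
    · obtain ⟨hxp, hxI⟩ := Multiset.mem_filter.1 hx
      simp only [hx, if_true, S, D, Multiset.count_filter, hxI, hxp, count_roots]
      exact rootMultiplicity_sub_one_le_derivative_rootMultiplicity _ _
    · simp [Multiset.count_eq_zero_of_notMem hx]
  have hS : Multiset.card S = Multiset.card S.dedup + Multiset.card (S - S.dedup) := by
    rw [Multiset.card_sub (Multiset.dedup_le S)]
    have := Multiset.card_le_card (Multiset.dedup_le S)
    omega
  have hD := congrArg Multiset.card (Multiset.filter_add_not (· ∈ p.roots) D)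
  rw [Multiset.card_add] at hD
  have := Multiset.card_le_card h_repeated
  omega

end Polynomial

open scoped Classical in
theorem stmt_11_general
    (I : Set ℝ) (hI : I.OrdConnected)
    (n : ℕ)
    (Q : Polynomial ℝ) (hdeg : Q.natDegree = n) :
    (Q.roots.filter (fun x => x ∈ I)).card +
      ((derivative (Q.map (algebraMap ℝ ℂ))).roots.filter
        (fun z => z ∉ (fun x : ℝ => (x : ℂ)) '' I)).card ≤ n := by
  set P := derivative (Q.map (algebraMap ℝ ℂ))
  set T := (fun x : ℝ => (x : ℂ)) '' I
  have hP : P = Q.derivative.map (algebraMap ℝ ℂ) := derivative_map Q _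
  -- needed when `n = 0`, where `n - 1` truncates to `0`
  have h_roots_I : (Q.roots.filter (· ∈ I)).card ≤ n :=
    (Multiset.card_le_card (Multiset.filter_le _ _)).trans (hdeg ▸ card_roots' Q)
  have h_rolle := card_roots_filter_le_card_roots_derivative_filter_succ hI Q
  have h_real : (Q.derivative.roots.filter (· ∈ I)).card ≤ (P.roots.filter (· ∈ T)).card := by
    rw [hP]
    exact card_roots_filter_le_card_roots_map_filter_image (algebraMap ℝ ℂ).injective _ I
  have h_split : (P.roots.filter (· ∉ T)).card + (P.roots.filter (· ∈ T)).card = P.roots.card := by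
    rw [← Multiset.card_add, add_comm, Multiset.filter_add_not]
  have h_total : P.roots.card ≤ n - 1 := calc
    P.roots.card ≤ P.natDegree := card_roots' P
    _ = Q.derivative.natDegree := by rw [hP, natDegree_map]
    _ ≤ n - 1 := hdeg ▸ natDegree_derivative_le Q
  omega

open scoped Classical in
theorem stmt_11
    (I : Set ℝ) (hI : I.OrdConnected)
    (n : ℕ) (hn : 1 ≤ n)
    (Q : Polynomial ℝ) (hdeg : Q.natDegree = n) :
    (Q.roots.filter (fun x => x ∈ I)).card +
      ((derivative (Q.map (algebraMap ℝ ℂ))).roots.filter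
        (fun z => z ∉ (fun x : ℝ => (x : ℂ)) '' I)).card ≤ n :=
  stmt_11_general I hI n Q hdeg
end
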